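/- arXiv:2109.01638 — 2 statements merged into one kernel-verified Lean document; each statement's English description precedes it below -/
import Mathlib

section
/- Let n ≥ 1, let M and N be connected topological n-manifolds, each equipped with a metric (d_M and d_N respectively) inducing its topology, and let f : M → N be a branched cover. Then for every x ∈ M there exists r_x > 0 such that for all 0 < r < r_x, the set U_f(x, r) is a precompact normal neighborhood of x; that is: the closure of U_f(x,r) in M is compact, f(∂U_f(x,r)) = ∂(f(U_f(x,r))), and U_f(x,r) ∩ f⁻¹{f(x)} = {x}. -/
/-!
A point `x` is isolated in its fiber, so it has a compact neighborhood `K` meeting the fiber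
only at `x`. The compact set `f(∂K)` misses `f x`, hence stays at distance `≥ rₓ > 0` from it.
For `r < rₓ` the connected set `U = U_f(x, r)` contains `x ∈ int K` and cannot cross `∂K`, so
`U ⊆ int K` and `closure U` is compact. Being a component of the open set `f⁻¹ B(f x, r)`,
`U` is relatively closed in it, so `f(∂U)` lies outside the ball, which contains `f(U)`;
together with `f(closure U) = closure f(U)` (compactness) and the openness of `f`, this gives
`f(∂U) = ∂f(U)`.
-/

open Metric Set Filter Topology

/-- A topological `n`-manifold structure on a space: every point has an open
neighborhood homeomorphic to `ℝⁿ` (Hausdorffness and second countability are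
carried as typeclass assumptions). -/
def IsTopNManifold (n : ℕ) (M : Type*) [TopologicalSpace M] : Prop :=
  ∀ x : M, ∃ U : Set M, IsOpen U ∧ x ∈ U ∧
    Nonempty (U ≃ₜ EuclideanSpace ℝ (Fin n))

/-- A branched cover: a continuous, open, discrete map. Discreteness means that
no fiber `f⁻¹{y}` has an accumulation point. -/
def IsBranchedCover {M N : Type*} [TopologicalSpace M] [TopologicalSpace N]
    (f : M → N) : Prop :=
  Continuous f ∧ IsOpenMap f ∧
    ∀ y : N, ∀ x : M, ¬ AccPt x (Filter.principal (f ⁻¹' {y}))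

/-- `U_f(x, r)`: the connected component of `x` in `f⁻¹(B(f(x), r))`. -/
def normalComp {M N : Type*} [MetricSpace M] [MetricSpace N]
    (f : M → N) (x : M) (r : ℝ) : Set M :=
  connectedComponentIn (f ⁻¹' Metric.ball (f x) r) x

section Manifold

variable {n : ℕ} {M : Type*} [TopologicalSpace M]

theorem IsTopNManifold.exists_isOpenEmbedding_mem_range (hM : IsTopNManifold n M) (x : M) :
    ∃ φ : EuclideanSpace ℝ (Fin n) → M, IsOpenEmbedding φ ∧ x ∈ range φ := by
  obtain ⟨U, hU, hxU, ⟨e⟩⟩ := hM x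
  exact ⟨(↑) ∘ e.symm, hU.isOpenEmbedding_subtypeVal.comp e.symm.isOpenEmbedding,
    e ⟨x, hxU⟩, by simp⟩

noncomputable abbrev IsTopNManifold.chartedSpace (hM : IsTopNManifold n M) :
    ChartedSpace (EuclideanSpace ℝ (Fin n)) M :=
  let chart x :=
    ((hM.exists_isOpenEmbedding_mem_range x).choose_spec.1.toOpenPartialHomeomorph _).symm
  { atlas := range chart
    chartAt := chart
    mem_chart_source x := by
      simpa [chart] using (hM.exists_isOpenEmbedding_mem_range x).choose_spec.2
    chart_mem_atlas := mem_range_self }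

theorem IsTopNManifold.locallyCompactSpace (hM : IsTopNManifold n M) : LocallyCompactSpace M :=
  @ChartedSpace.locallyCompactSpace _ _ _ _ hM.chartedSpace _

theorem IsTopNManifold.locallyConnectedSpace (hM : IsTopNManifold n M) :
    LocallyConnectedSpace M :=
  @ChartedSpace.locallyConnectedSpace _ _ _ _ hM.chartedSpace _

end Manifold

section Topology

variable {X Y : Type*} [TopologicalSpace X] [TopologicalSpace Y]

theorem exists_isCompact_mem_nhds_inter_subset_singleton [LocallyCompactSpace X] {C : Set X}
    {x : X} (hx : ¬AccPt x (𝓟 C)) : ∃ K ∈ 𝓝 x, IsCompact K ∧ K ∩ C ⊆ {x} := by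
  rw [accPt_iff_nhds] at hx
  push Not at hx
  obtain ⟨T, hT, hTC⟩ := hx
  obtain ⟨K, hKx, hKT, hK⟩ := LocallyCompactSpace.local_compact_nhds x T hT
  exact ⟨K, hKx, hK, fun z hz => hTC z ⟨hKT hz.1, hz.2⟩⟩

theorem IsPreconnected.subset_interior_of_disjoint_frontier {s K : Set X}
    (hs : IsPreconnected s) (hsK : (s ∩ interior K).Nonempty) (hd : Disjoint s (frontier K)) :
    s ⊆ interior K :=
  hs.subset_of_closure_inter_subset isOpen_interior hsK fun z ⟨hzK, hzs⟩ => by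
    by_contra hz
    exact hd.notMem_of_mem_left hzs ⟨closure_mono interior_subset hzK, hz⟩

theorem IsOpen.closure_connectedComponentIn_inter_subset [LocallyConnectedSpace X] {F : Set X}
    (hF : IsOpen F) (x : X) :
    closure (connectedComponentIn F x) ∩ F ⊆ connectedComponentIn F x := by
  rintro z ⟨hzcl, hzF⟩
  obtain ⟨w, hwz, hwx⟩ := mem_closure_iff.1 hzcl _ hF.connectedComponentIn
    (mem_connectedComponentIn hzF)
  rw [connectedComponentIn_eq hwx, ← connectedComponentIn_eq hwz]
  exact mem_connectedComponentIn hzF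

theorem image_frontier_eq_frontier_image [T2Space Y] {f : X → Y} (hfc : Continuous f)
    (hfo : IsOpenMap f) {U : Set X} (hU : IsOpen U) (hUc : IsCompact (closure U))
    (hd : Disjoint (f '' frontier U) (f '' U)) : f '' frontier U = frontier (f '' U) := by
  rw [hU.frontier_eq] at hd ⊢
  rw [(hfo U hU).frontier_eq, ← image_closure_of_isCompact hUc hfc.continuousOn]
  ext y
  constructor
  · rintro ⟨z, hz, rfl⟩
    exact ⟨mem_image_of_mem f hz.1, hd.notMem_of_mem_left ⟨z, hz, rfl⟩⟩
  · rintro ⟨⟨z, hz, rfl⟩, hzU⟩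
    exact ⟨z, ⟨hz, fun h => hzU (mem_image_of_mem f h)⟩, rfl⟩

end Topology

section NormalComp

variable {M N : Type*} [MetricSpace M] [MetricSpace N] {f : M → N} {x : M} {r : ℝ}

theorem mem_normalComp_self (hr : 0 < r) : x ∈ normalComp f x r :=
  mem_connectedComponentIn (mem_ball_self hr)

theorem isPreconnected_normalComp : IsPreconnected (normalComp f x r) :=
  isPreconnected_connectedComponentIn

theorem normalComp_subset_preimage_ball : normalComp f x r ⊆ f ⁻¹' ball (f x) r :=
  connectedComponentIn_subset _ _

variable [LocallyConnectedSpace M]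

theorem isOpen_normalComp (hf : Continuous f) : IsOpen (normalComp f x r) :=
  (isOpen_ball.preimage hf).connectedComponentIn

theorem disjoint_image_frontier_normalComp (hf : Continuous f) :
    Disjoint (f '' frontier (normalComp f x r)) (f '' normalComp f x r) := by
  refine Disjoint.mono_right (image_subset_iff.2 normalComp_subset_preimage_ball) ?_
  rw [disjoint_left]
  rintro _ ⟨z, hz, rfl⟩ hzB
  rw [(isOpen_normalComp hf).frontier_eq] at hz
  exact hz.2 ((isOpen_ball.preimage hf).closure_connectedComponentIn_inter_subset x ⟨hz.1, hzB⟩)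

end NormalComp

theorem exists_precompact_normal_neighborhood_general {n : ℕ}
    {M N : Type*} [MetricSpace M] [MetricSpace N]
    (hM : IsTopNManifold n M)
    {f : M → N} (hf : IsBranchedCover f) (x : M) :
    ∃ rx > (0 : ℝ), ∀ r : ℝ, 0 < r → r < rx →
      IsCompact (closure (normalComp f x r)) ∧
      f '' frontier (normalComp f x r) = frontier (f '' normalComp f x r) ∧
      normalComp f x r ∩ f ⁻¹' {f x} = {x} := by
  have := hM.locallyCompactSpace
  have := hM.locallyConnectedSpace
  obtain ⟨hfc, hfo, hdisc⟩ := hf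
  obtain ⟨K, hKx, hK, hKfib⟩ := exists_isCompact_mem_nhds_inter_subset_singleton (hdisc (f x) x)
  have hxK : x ∈ interior K := mem_interior_iff_mem_nhds.2 hKx
  have hKfr : frontier K ⊆ K := frontier_subset_iff_isClosed.2 hK.isClosed
  have hfx : f x ∉ f '' frontier K := by
    rintro ⟨z, hz, hfz⟩
    obtain rfl : z = x := hKfib ⟨hKfr hz, hfz⟩
    exact hz.2 hxK
  obtain ⟨rx, hrx, hball⟩ := Metric.isOpen_iff.1
    ((hK.of_isClosed_subset isClosed_frontier hKfr).image hfc).isClosed.isOpen_compl (f x) hfx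
  refine ⟨rx, hrx, fun r hr hrrx => ?_⟩
  have hUK : normalComp f x r ⊆ interior K :=
    isPreconnected_normalComp.subset_interior_of_disjoint_frontier
      ⟨x, mem_normalComp_self hr, hxK⟩
      (disjoint_left.2 fun z hz hzK => hball (ball_subset_ball hrrx.le
        (normalComp_subset_preimage_ball (f := f) hz)) (mem_image_of_mem f hzK))
  have hUc : IsCompact (closure (normalComp f x r)) :=
    hK.of_isClosed_subset isClosed_closure
      (closure_minimal (hUK.trans interior_subset) hK.isClosed)
  refine ⟨hUc, image_frontier_eq_frontier_image hfc hfo (isOpen_normalComp hfc) hUc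
    (disjoint_image_frontier_normalComp hfc), ?_⟩
  exact Subset.antisymm (fun z hz => hKfib ⟨interior_subset (hUK hz.1), hz.2⟩)
    (singleton_subset_iff.2 ⟨mem_normalComp_self hr, rfl⟩)

/-- **Existence of precompact normal neighborhoods.**
If `f : M → N` is a branched cover between connected metric topological `n`-manifolds,
then for every `x ∈ M` there is `r_x > 0` such that for all `0 < r < r_x` the set
`U_f(x, r)` is a precompact normal neighborhood of `x`: its closure is compact,
`f(∂U_f(x,r)) = ∂(f(U_f(x,r)))`, and `U_f(x,r) ∩ f⁻¹{f(x)} = {x}`. -/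
theorem exists_precompact_normal_neighborhood {n : ℕ} (hn : 1 ≤ n)
    {M N : Type*} [MetricSpace M] [MetricSpace N]
    [SecondCountableTopology M] [SecondCountableTopology N]
    [ConnectedSpace M] [ConnectedSpace N]
    (hM : IsTopNManifold n M) (hN : IsTopNManifold n N)
    {f : M → N} (hf : IsBranchedCover f) (x : M) :
    ∃ rx > (0 : ℝ), ∀ r : ℝ, 0 < r → r < rx →
      IsCompact (closure (normalComp f x r)) ∧
      f '' frontier (normalComp f x r) = frontier (f '' normalComp f x r) ∧
      normalComp f x r ∩ f ⁻¹' {f x} = {x} :=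
  exists_precompact_normal_neighborhood_general hM hf x
end

section
/- Let n ≥ 1, let M and N be connected topological n-manifolds, each equipped with a metric inducing its topology, let f : M → N be a branched cover, let x ∈ M and r > 0, and set U = U_f(x,r). Assume that the closure of U in M is compact, that f(∂U) = ∂(f(U)), and that f(U) = B_N(f(x), r). Then the restriction f|_U : U → B_N(f(x), r) is proper: for every compact set K ⊆ B_N(f(x), r), the set U ∩ f⁻¹(K) is compact. -/
open Metric Set Filter Topology

/-- **Properness of the restriction of a branched cover to a precompact normal component.**
If `f : M → N` is a branched cover between connected metric topological `n`-manifolds,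
`U = U_f(x,r)` has compact closure, `f(∂U) = ∂(f(U))`, and `f(U) = B(f(x), r)`, then
the restriction `f|_U : U → B(f(x), r)` is proper: for every compact `K ⊆ B(f(x), r)`,
the set `U ∩ f⁻¹(K)` is compact. -/
theorem normalComp_restriction_proper {n : ℕ} (hn : 1 ≤ n)
    {M N : Type*} [MetricSpace M] [MetricSpace N]
    [SecondCountableTopology M] [SecondCountableTopology N]
    [ConnectedSpace M] [ConnectedSpace N]
    (hM : IsTopNManifold n M) (hN : IsTopNManifold n N)
    {f : M → N} (hf : IsBranchedCover f) (x : M) (r : ℝ) (hr : 0 < r)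
    (hcpt : IsCompact (closure (normalComp f x r)))
    (hnormal : f '' frontier (normalComp f x r) = frontier (f '' normalComp f x r))
    (himg : f '' normalComp f x r = Metric.ball (f x) r) :
    ∀ K : Set N, K ⊆ Metric.ball (f x) r → IsCompact K →
      IsCompact (normalComp f x r ∩ f ⁻¹' K) := by
  intro K hK hKc
  set U := normalComp f x r with hU
  have heq : U ∩ f ⁻¹' K = closure U ∩ f ⁻¹' K := by
    apply Subset.antisymm
    · exact inter_subset_inter_left _ subset_closure
    · rintro z ⟨hz, hzK⟩
      refine ⟨?_, hzK⟩
      by_contra hzU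
      have hzf : z ∈ frontier U := ⟨hz, fun h => hzU (interior_subset h)⟩
      have : f z ∈ frontier (f '' U) := hnormal ▸ mem_image_of_mem f hzf
      rw [himg] at this
      exact this.2 (by rw [isOpen_ball.interior_eq]; exact hK hzK)
  rw [heq]
  exact hcpt.inter_right (hKc.isClosed.preimage hf.1)
end
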